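/- arXiv:2008.03392 — 5 statements merged into one kernel-verified Lean document; each statement's English description precedes it below -/
import Mathlib

section
/- Grouping effect bound for the simplified SCCA: let X in R^{n x p} and Y in R^{n x q} have columns of unit Euclidean norm, let v* in R^q satisfy ||v*||_2 <= 1, and let u* satisfy the stationarity equation 2*alpha_1*u* + lambda_1*s = X^T Y v* for some alpha_1 > 0, lambda_1 >= 0, where s_k = sign(u*_k) whenever u*_k != 0. If u*_i * u*_j > 0, then |u*_i - u*_j| <= (1/alpha_1) * sigma_max(Y) * sqrt((1 - r_ij)/2), where r_ij = <x_i, x_j>. -/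
/-! Subtracting the stationarity equations at `i` and `j` cancels the `ℓ₁` terms, because
`u i * u j > 0` forces `s i = s j`. What remains is `2 α₁ (u i - u j) = ⟪x_i - x_j, Y v⟫`, and
Cauchy–Schwarz bounds it by `‖x_i - x_j‖ ‖Y v‖ ≤ √(2 - 2 r) · σ_max(Y)`. -/

open Matrix

noncomputable def sigmaMax {n q : ℕ} (Y : Matrix (Fin n) (Fin q) ℝ) : ℝ :=
  ‖(Matrix.toEuclideanLin Y).toContinuousLinearMap‖

theorem Real.sign_eq_sign_of_mul_pos {a b : ℝ} (h : 0 < a * b) : Real.sign a = Real.sign b := by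
  rcases pos_and_pos_or_neg_and_neg_of_mul_pos h with ⟨ha, hb⟩ | ⟨ha, hb⟩
  · rw [Real.sign_of_pos ha, Real.sign_of_pos hb]
  · rw [Real.sign_of_neg ha, Real.sign_of_neg hb]

theorem Real.abs_sum_mul_le_sqrt_mul_sqrt {ι : Type*} (s : Finset ι) (f g : ι → ℝ) :
    |∑ i ∈ s, f i * g i| ≤ √(∑ i ∈ s, f i ^ 2) * √(∑ i ∈ s, g i ^ 2) := by
  refine abs_le'.2 ⟨Real.sum_mul_le_sqrt_mul_sqrt s f g, ?_⟩
  simpa only [Pi.neg_apply, neg_mul, Finset.sum_neg_distrib, neg_sq] using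
    Real.sum_mul_le_sqrt_mul_sqrt s (-f) g

theorem EuclideanSpace.norm_toLp_eq_sqrt_sum_sq {ι : Type*} [Fintype ι] (x : ι → ℝ) :
    ‖WithLp.toLp 2 x‖ = √(∑ i, x i ^ 2) := by
  simp [EuclideanSpace.norm_eq]

theorem sqrt_sum_sq_mulVec_le {n q : ℕ} (Y : Matrix (Fin n) (Fin q) ℝ) (v : Fin q → ℝ) :
    √(∑ l, (Y *ᵥ v) l ^ 2) ≤ sigmaMax Y * √(∑ k, v k ^ 2) := by
  simpa [← EuclideanSpace.norm_toLp_eq_sqrt_sum_sq, toLpLin_toLp, toLin'_apply, sigmaMax] using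
    (toEuclideanLin Y).toContinuousLinearMap.le_opNorm (WithLp.toLp 2 v)

theorem sqrt_sum_sq_sub_of_sqrt_sum_sq_eq_one {ι : Type*} [Fintype ι] {x y : ι → ℝ}
    (hx : √(∑ l, x l ^ 2) = 1) (hy : √(∑ l, y l ^ 2) = 1) :
    √(∑ l, (x l - y l) ^ 2) = 2 * √((1 - ∑ l, x l * y l) / 2) := by
  have hexpand : ∑ l, (x l - y l) ^ 2 = 2 ^ 2 * ((1 - ∑ l, x l * y l) / 2) := by
    have hsub : ∑ l, (x l - y l) ^ 2 = ∑ l, x l ^ 2 + ∑ l, y l ^ 2 - 2 * ∑ l, x l * y l := by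
      rw [Finset.mul_sum, ← Finset.sum_add_distrib, ← Finset.sum_sub_distrib]
      exact Finset.sum_congr rfl fun l _ => by ring
    rw [hsub, Real.sqrt_eq_one.1 hx, Real.sqrt_eq_one.1 hy]
    ring
  rw [hexpand, Real.sqrt_mul (by norm_num), Real.sqrt_sq (by norm_num)]

theorem mul_sub_eq_sub_of_stationary {ι : Type*} {u s g : ι → ℝ} {α lam : ℝ}
    (hs : ∀ k, u k ≠ 0 → s k = Real.sign (u k)) (hstat : ∀ k, 2 * α * u k + lam * s k = g k)
    {i j : ι} (hij : 0 < u i * u j) : 2 * α * (u i - u j) = g i - g j := by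
  have hsij : s i = s j := by
    rw [hs i (left_ne_zero_of_mul hij.ne'), hs j (right_ne_zero_of_mul hij.ne'),
      Real.sign_eq_sign_of_mul_pos hij]
  rw [← hstat i, ← hstat j, hsij]
  ring

theorem transpose_mul_mulVec_sub_eq_sum {m n p : Type*} [Fintype m] [Fintype p]
    (X : Matrix m n ℝ) (Y : Matrix m p ℝ) (v : p → ℝ) (i j : n) :
    ((Xᵀ * Y) *ᵥ v) i - ((Xᵀ * Y) *ᵥ v) j = ∑ l, (X l i - X l j) * (Y *ᵥ v) l := by
  rw [← mulVec_mulVec]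
  simp only [mulVec, dotProduct, transpose_apply, ← Finset.sum_sub_distrib, sub_mul]

theorem stmt_10_general (n p q : ℕ) (X : Matrix (Fin n) (Fin p) ℝ) (Y : Matrix (Fin n) (Fin q) ℝ)
    (hX : ∀ k, Real.sqrt (∑ l, X l k ^ 2) = 1)
    (v : Fin q → ℝ) (hv : Real.sqrt (∑ j, v j ^ 2) ≤ 1)
    (u s : Fin p → ℝ) (α₁ lam₁ : ℝ) (hα : 0 < α₁)
    (hs : ∀ k, u k ≠ 0 → s k = Real.sign (u k))
    (hstat : ∀ k, 2 * α₁ * u k + lam₁ * s k = ((Xᵀ * Y).mulVec v) k)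
    (i j : Fin p) (hij : u i * u j > 0) (r : ℝ) (hr : r = ∑ l, X l i * X l j) :
    |u i - u j| ≤ (1 / α₁) * sigmaMax Y * Real.sqrt ((1 - r) / 2) := by
  have hdiff : 2 * α₁ * (u i - u j) = ∑ l, (X l i - X l j) * (Y *ᵥ v) l := by
    rw [mul_sub_eq_sub_of_stationary hs hstat hij, transpose_mul_mulVec_sub_eq_sum]
  have hYv : √(∑ l, (Y *ᵥ v) l ^ 2) ≤ sigmaMax Y :=
    (sqrt_sum_sq_mulVec_le Y v).trans (mul_le_of_le_one_right (norm_nonneg _) hv)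
  have hbound : 2 * α₁ * |u i - u j| ≤ 2 * √((1 - r) / 2) * sigmaMax Y := calc
    2 * α₁ * |u i - u j| = |∑ l, (X l i - X l j) * (Y *ᵥ v) l| := by
      rw [← hdiff, abs_mul, abs_of_pos (by positivity : (0 : ℝ) < 2 * α₁)]
    _ ≤ √(∑ l, (X l i - X l j) ^ 2) * √(∑ l, (Y *ᵥ v) l ^ 2) :=
      Real.abs_sum_mul_le_sqrt_mul_sqrt _ _ _
    _ ≤ 2 * √((1 - r) / 2) * sigmaMax Y := by
      rw [sqrt_sum_sq_sub_of_sqrt_sum_sq_eq_one (hX i) (hX j), ← hr]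
      exact mul_le_mul_of_nonneg_left hYv (by positivity)
  rw [one_div_mul_eq_div, div_mul_eq_mul_div, le_div_iff₀ hα]
  linarith

theorem stmt_10 (n p q : ℕ) (X : Matrix (Fin n) (Fin p) ℝ) (Y : Matrix (Fin n) (Fin q) ℝ)
    (hX : ∀ k, Real.sqrt (∑ l, X l k ^ 2) = 1)
    (hY : ∀ k, Real.sqrt (∑ l, Y l k ^ 2) = 1)
    (v : Fin q → ℝ) (hv : Real.sqrt (∑ j, v j ^ 2) ≤ 1)
    (u s : Fin p → ℝ) (α₁ lam₁ : ℝ) (hα : 0 < α₁) (hlam : 0 ≤ lam₁)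
    (hs : ∀ k, u k ≠ 0 → s k = Real.sign (u k))
    (hstat : ∀ k, 2 * α₁ * u k + lam₁ * s k = ((Xᵀ * Y).mulVec v) k)
    (i j : Fin p) (hij : u i * u j > 0) (r : ℝ) (hr : r = ∑ l, X l i * X l j) :
    |u i - u j| ≤ (1 / α₁) * sigmaMax Y * Real.sqrt ((1 - r) / 2) :=
  stmt_10_general n p q X Y hX v hv u s α₁ lam₁ hα hs hstat i j hij r hr
end

section
/- Grouping effect bound (L1 version): under the same stationarity assumption 2*alpha_1*u* + lambda_1*s = X^T Y v* with alpha_1 > 0, lambda_1 >= 0, columns of X of unit norm, and ||v*||_1 <= c_2, if u*_i * u*_j > 0 then |u*_i - u*_j| <= (c_2/alpha_1) * sqrt( sum_l max_j Y_{lj}^2 ) * sqrt((1 - r_ij)/2), where r_ij = <x_i, x_j>. -/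
/-!
When `u i * u j > 0` the sign terms of the two stationarity equations coincide, so subtracting them
gives `2 α₁ (u i - u j) = (x_i - x_j) ⬝ᵥ Y v`. Cauchy–Schwarz then bounds this by
`‖x_i - x_j‖ ‖Y v‖`, where `‖x_i - x_j‖² = 2 (1 - r)` for unit columns and
`|(Y v)_l| ≤ max_k |Y_lk| · ‖v‖₁ ≤ c₂ max_k |Y_lk|`.
-/

open Matrix

section DotProduct

variable {ι : Type*} [Fintype ι]

theorem abs_dotProduct_le_sqrt_mul_sqrt (a b : ι → ℝ) :
    |a ⬝ᵥ b| ≤ √(a ⬝ᵥ a) * √(b ⬝ᵥ b) := by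
  have ha : 0 ≤ a ⬝ᵥ a := Finset.sum_nonneg fun l _ => mul_self_nonneg (a l)
  rw [← Real.sqrt_mul ha]
  apply Real.abs_le_sqrt
  simpa only [dotProduct, sq] using Finset.sum_mul_sq_le_sq_mul_sq Finset.univ a b

theorem sub_dotProduct_sub_self_of_unit {a b : ι → ℝ} (ha : a ⬝ᵥ a = 1) (hb : b ⬝ᵥ b = 1) :
    (a - b) ⬝ᵥ (a - b) = 2 * (1 - a ⬝ᵥ b) := by
  rw [sub_dotProduct, dotProduct_sub, dotProduct_sub, ha, hb, dotProduct_comm b a]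
  ring

theorem abs_le_sqrt_iSup_sq (f : ι → ℝ) (k : ι) : |f k| ≤ √(⨆ k, f k ^ 2) :=
  Real.abs_le_sqrt (le_ciSup (f := fun k => f k ^ 2) (Finite.bddAbove_range _) k)

theorem abs_dotProduct_le_sqrt_iSup_sq_mul (a b : ι → ℝ) :
    |a ⬝ᵥ b| ≤ √(⨆ k, a k ^ 2) * ∑ k, |b k| := by
  calc |a ⬝ᵥ b| ≤ ∑ k, |a k| * |b k| := by
        simpa only [dotProduct, abs_mul] using Finset.abs_sum_le_sum_abs (fun k => a k * b k) _
    _ ≤ ∑ k, √(⨆ k, a k ^ 2) * |b k| := by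
        gcongr with k
        exact abs_le_sqrt_iSup_sq a k
    _ = √(⨆ k, a k ^ 2) * ∑ k, |b k| := (Finset.mul_sum _ _ _).symm

end DotProduct

theorem sqrt_mulVec_dotProduct_self_le {m k : Type*} [Fintype m] [Fintype k]
    (Y : Matrix m k ℝ) {v : k → ℝ} {c : ℝ} (hv : ∑ j, |v j| ≤ c) :
    √((Y *ᵥ v) ⬝ᵥ (Y *ᵥ v)) ≤ c * √(∑ l, ⨆ j, Y l j ^ 2) := by
  have hc : 0 ≤ c := (Finset.sum_nonneg fun j _ => abs_nonneg (v j)).trans hv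
  have hrow : ∀ l, (Y *ᵥ v) l * (Y *ᵥ v) l ≤ c ^ 2 * ⨆ j, Y l j ^ 2 := by
    intro l
    have h : |(Y *ᵥ v) l| ≤ √(⨆ j, Y l j ^ 2) * c :=
      (abs_dotProduct_le_sqrt_iSup_sq_mul (Y l) v).trans
        (mul_le_mul_of_nonneg_left hv (Real.sqrt_nonneg _))
    calc (Y *ᵥ v) l * (Y *ᵥ v) l = |(Y *ᵥ v) l| * |(Y *ᵥ v) l| := (abs_mul_abs_self _).symm
      _ ≤ (√(⨆ j, Y l j ^ 2) * c) * (√(⨆ j, Y l j ^ 2) * c) :=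
          mul_self_le_mul_self (abs_nonneg _) h
      _ = c ^ 2 * ⨆ j, Y l j ^ 2 := by
          rw [mul_mul_mul_comm, Real.mul_self_sqrt (Real.iSup_nonneg fun j => sq_nonneg (Y l j))]
          ring
  calc √((Y *ᵥ v) ⬝ᵥ (Y *ᵥ v)) ≤ √(c ^ 2 * ∑ l, ⨆ j, Y l j ^ 2) := by
        rw [Finset.mul_sum]
        exact Real.sqrt_le_sqrt (Finset.sum_le_sum fun l _ => hrow l)
    _ = c * √(∑ l, ⨆ j, Y l j ^ 2) := by rw [Real.sqrt_mul (sq_nonneg c), Real.sqrt_sq hc]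

theorem two_mul_sub_eq_dotProduct_of_stationary {n p q : Type*} [Fintype n] [Fintype q]
    {X : Matrix n p ℝ} {Y : Matrix n q ℝ} {v : q → ℝ} {u s : p → ℝ} {α lam : ℝ}
    (hs : ∀ k, u k ≠ 0 → s k = Real.sign (u k))
    (hstat : ∀ k, 2 * α * u k + lam * s k = ((Xᵀ * Y) *ᵥ v) k)
    {i j : p} (hij : 0 < u i * u j) :
    2 * α * (u i - u j) = (Xᵀ i - Xᵀ j) ⬝ᵥ (Y *ᵥ v) := by
  have hsij : s i = s j := by
    rw [hs i (left_ne_zero_of_mul hij.ne'), hs j (right_ne_zero_of_mul hij.ne'),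
      Real.sign_eq_sign_of_mul_pos hij]
  have hcol : ∀ k, ((Xᵀ * Y) *ᵥ v) k = Xᵀ k ⬝ᵥ (Y *ᵥ v) := fun k => by
    rw [← mulVec_mulVec]; rfl
  rw [sub_dotProduct, ← hcol, ← hcol, ← hstat, ← hstat, hsij]
  ring

theorem stmt_11_general (n p q : ℕ) (X : Matrix (Fin n) (Fin p) ℝ) (Y : Matrix (Fin n) (Fin q) ℝ)
    (hX : ∀ k, Real.sqrt (∑ l, X l k ^ 2) = 1)
    (c₂ : ℝ) (v : Fin q → ℝ) (hv : (∑ j, |v j|) ≤ c₂)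
    (u s : Fin p → ℝ) (α₁ lam₁ : ℝ) (hα : 0 < α₁)
    (hs : ∀ k, u k ≠ 0 → s k = Real.sign (u k))
    (hstat : ∀ k, 2 * α₁ * u k + lam₁ * s k = ((Xᵀ * Y).mulVec v) k)
    (i j : Fin p) (hij : u i * u j > 0) (r : ℝ) (hr : r = ∑ l, X l i * X l j) :
    |u i - u j| ≤ (c₂ / α₁) * Real.sqrt (∑ l, ⨆ k, Y l k ^ 2) *
      Real.sqrt ((1 - r) / 2) := by
  have hcol : ∀ k, Xᵀ k ⬝ᵥ Xᵀ k = 1 := fun k => by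
    simpa only [dotProduct, transpose_apply, sq, Real.sqrt_eq_one] using hX k
  have hdiff : √((Xᵀ i - Xᵀ j) ⬝ᵥ (Xᵀ i - Xᵀ j)) = 2 * √((1 - r) / 2) := by
    rw [sub_dotProduct_sub_self_of_unit (hcol i) (hcol j), hr,
      show 2 * (1 - Xᵀ i ⬝ᵥ Xᵀ j) = 2 ^ 2 * ((1 - Xᵀ i ⬝ᵥ Xᵀ j) / 2) by ring,
      Real.sqrt_mul (sq_nonneg 2), Real.sqrt_sq zero_le_two]
    rfl
  have hbound : 2 * α₁ * |u i - u j| ≤ 2 * √((1 - r) / 2) * (c₂ * √(∑ l, ⨆ k, Y l k ^ 2)) := by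
    calc 2 * α₁ * |u i - u j| = |(Xᵀ i - Xᵀ j) ⬝ᵥ (Y *ᵥ v)| := by
          rw [← two_mul_sub_eq_dotProduct_of_stationary hs hstat hij, abs_mul,
            abs_of_pos (by positivity : 0 < 2 * α₁)]
      _ ≤ _ := (abs_dotProduct_le_sqrt_mul_sqrt _ _).trans
          (by rw [hdiff]; gcongr; exact sqrt_mulVec_dotProduct_self_le Y hv)
  rw [div_mul_eq_mul_div, div_mul_eq_mul_div, le_div_iff₀ hα]
  linarith

theorem stmt_11 (n p q : ℕ) (X : Matrix (Fin n) (Fin p) ℝ) (Y : Matrix (Fin n) (Fin q) ℝ)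
    (hX : ∀ k, Real.sqrt (∑ l, X l k ^ 2) = 1)
    (c₂ : ℝ) (v : Fin q → ℝ) (hv : (∑ j, |v j|) ≤ c₂)
    (u s : Fin p → ℝ) (α₁ lam₁ : ℝ) (hα : 0 < α₁) (hlam : 0 ≤ lam₁)
    (hs : ∀ k, u k ≠ 0 → s k = Real.sign (u k))
    (hstat : ∀ k, 2 * α₁ * u k + lam₁ * s k = ((Xᵀ * Y).mulVec v) k)
    (i j : Fin p) (hij : u i * u j > 0) (r : ℝ) (hr : r = ∑ l, X l i * X l j) :
    |u i - u j| ≤ (c₂ / α₁) * Real.sqrt (∑ l, ⨆ k, Y l k ^ 2) *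
      Real.sqrt ((1 - r) / 2) :=
  stmt_11_general n p q X Y hX c₂ v hv u s α₁ lam₁ hα hs hstat i j hij r hr
end

section
/- Grouping effect bound for opposite signs: under the stationarity assumption 2*alpha_1*u* + lambda_1*s = X^T Y v* with alpha_1 > 0, lambda_1 >= 0, columns of X of unit norm, and ||v*||_2 <= 1, if u*_i * u*_j < 0 then |u*_i + u*_j| <= (1/alpha_1) * sigma_max(Y) * sqrt((1 + r_ij)/2), where r_ij = <x_i, x_j>. -/
open Matrix
/-!
Adding the stationarity equations at `i` and `j` cancels the `ℓ₁` terms, because `u i` and `u j`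
have opposite signs, and leaves `2 α₁ (u i + u j) = ⟪x_i + x_j, Y v⟫`. By Cauchy–Schwarz this is at
most `‖x_i + x_j‖ ‖Y v‖ ≤ 2 √((1 + r) / 2) · σ_max(Y)`, since `x_i`, `x_j` are unit vectors.
-/

open Real WithLp

theorem Real.sign_add_sign_eq_zero_of_mul_neg {a b : ℝ} (h : a * b < 0) :
    sign a + sign b = 0 := by
  rcases mul_neg_iff.mp h with ⟨ha, hb⟩ | ⟨ha, hb⟩
  · rw [sign_of_pos ha, sign_of_neg hb]; ring
  · rw [sign_of_neg ha, sign_of_pos hb]; ring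

theorem two_mul_add_eq_of_stationary {ι : Type*} {u s g : ι → ℝ} {α lam : ℝ}
    (hs : ∀ k, u k ≠ 0 → s k = sign (u k)) (hstat : ∀ k, 2 * α * u k + lam * s k = g k)
    {i j : ι} (hij : u i * u j < 0) : 2 * α * (u i + u j) = g i + g j := by
  have hsij : s i + s j = 0 := by
    rw [hs i (left_ne_zero_of_mul hij.ne), hs j (right_ne_zero_of_mul hij.ne)]
    exact sign_add_sign_eq_zero_of_mul_neg hij
  linear_combination hstat i + hstat j - lam * hsij

theorem EuclideanSpace.norm_toLp_eq_sqrt {ι : Type*} [Fintype ι] (x : ι → ℝ) :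
    ‖toLp 2 x‖ = √(∑ l, x l ^ 2) := by
  simp [EuclideanSpace.norm_eq]

theorem Matrix.transpose_mulVec_apply_add_eq_inner {m n : Type*} [Fintype m] (X : Matrix m n ℝ)
    (w : m → ℝ) (i j : n) :
    (Xᵀ *ᵥ w) i + (Xᵀ *ᵥ w) j = inner ℝ (toLp 2 (Xᵀ i + Xᵀ j)) (toLp 2 w) := by
  rw [EuclideanSpace.inner_toLp_toLp, star_trivial, dotProduct_comm, add_dotProduct]
  rfl

theorem norm_add_eq_two_mul_sqrt_of_norm_eq_one {F : Type*} [NormedAddCommGroup F]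
    [InnerProductSpace ℝ F] {x y : F} (hx : ‖x‖ = 1) (hy : ‖y‖ = 1) :
    ‖x + y‖ = 2 * √((1 + inner ℝ x y) / 2) := by
  have h : ‖x + y‖ ^ 2 = 2 ^ 2 * ((1 + inner ℝ x y) / 2) := by
    rw [norm_add_sq_real, hx, hy]; ring
  rw [← sqrt_sq (norm_nonneg _), h, sqrt_mul (by norm_num), sqrt_sq (by norm_num)]

theorem norm_toLp_mulVec_le_sigmaMax {n q : ℕ} (Y : Matrix (Fin n) (Fin q) ℝ) (v : Fin q → ℝ) :
    ‖toLp 2 (Y *ᵥ v)‖ ≤ sigmaMax Y * ‖toLp 2 v‖ :=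
  (toEuclideanLin Y).toContinuousLinearMap.le_opNorm (toLp 2 v)

theorem stmt_12_general (n p q : ℕ) (X : Matrix (Fin n) (Fin p) ℝ) (Y : Matrix (Fin n) (Fin q) ℝ)
    (hX : ∀ k, Real.sqrt (∑ l, X l k ^ 2) = 1)
    (v : Fin q → ℝ) (hv : Real.sqrt (∑ j, v j ^ 2) ≤ 1)
    (u s : Fin p → ℝ) (α₁ lam₁ : ℝ) (hα : 0 < α₁)
    (hs : ∀ k, u k ≠ 0 → s k = Real.sign (u k))
    (hstat : ∀ k, 2 * α₁ * u k + lam₁ * s k = ((Xᵀ * Y).mulVec v) k)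
    (i j : Fin p) (hij : u i * u j < 0) (r : ℝ) (hr : r = ∑ l, X l i * X l j) :
    |u i + u j| ≤ (1 / α₁) * sigmaMax Y * Real.sqrt ((1 + r) / 2) := by
  have hcol (k : Fin p) : ‖toLp 2 (Xᵀ k)‖ = 1 := (EuclideanSpace.norm_toLp_eq_sqrt _).trans (hX k)
  have hr_inner : r = inner ℝ (toLp 2 (Xᵀ i)) (toLp 2 (Xᵀ j)) := by
    simp [hr, EuclideanSpace.inner_toLp_toLp, dotProduct, mul_comm]
  have hYv : ‖toLp 2 (Y *ᵥ v)‖ ≤ sigmaMax Y :=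
    (norm_toLp_mulVec_le_sigmaMax Y v).trans <|
      mul_le_of_le_one_right (norm_nonneg _) (by rwa [EuclideanSpace.norm_toLp_eq_sqrt])
  have hsum := two_mul_add_eq_of_stationary hs hstat hij
  rw [← mulVec_mulVec, transpose_mulVec_apply_add_eq_inner] at hsum
  have key : 2 * α₁ * |u i + u j| ≤ 2 * √((1 + r) / 2) * sigmaMax Y :=
    calc 2 * α₁ * |u i + u j| = |2 * α₁ * (u i + u j)| := by
          rw [abs_mul, abs_of_pos (by positivity : (0 : ℝ) < 2 * α₁)]
      _ ≤ ‖toLp 2 (Xᵀ i + Xᵀ j)‖ * ‖toLp 2 (Y *ᵥ v)‖ := hsum ▸ abs_real_inner_le_norm _ _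
      _ ≤ 2 * √((1 + r) / 2) * sigmaMax Y := by
          rw [toLp_add, norm_add_eq_two_mul_sqrt_of_norm_eq_one (hcol i) (hcol j), ← hr_inner]
          gcongr
  rw [one_div_mul_eq_div, div_mul_eq_mul_div, le_div_iff₀ hα]
  linarith

theorem stmt_12 (n p q : ℕ) (X : Matrix (Fin n) (Fin p) ℝ) (Y : Matrix (Fin n) (Fin q) ℝ)
    (hX : ∀ k, Real.sqrt (∑ l, X l k ^ 2) = 1)
    (v : Fin q → ℝ) (hv : Real.sqrt (∑ j, v j ^ 2) ≤ 1)
    (u s : Fin p → ℝ) (α₁ lam₁ : ℝ) (hα : 0 < α₁) (hlam : 0 ≤ lam₁)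
    (hs : ∀ k, u k ≠ 0 → s k = Real.sign (u k))
    (hstat : ∀ k, 2 * α₁ * u k + lam₁ * s k = ((Xᵀ * Y).mulVec v) k)
    (i j : Fin p) (hij : u i * u j < 0) (r : ℝ) (hr : r = ∑ l, X l i * X l j) :
    |u i + u j| ≤ (1 / α₁) * sigmaMax Y * Real.sqrt ((1 + r) / 2) :=
  stmt_12_general n p q X Y hX v hv u s α₁ lam₁ hα hs hstat i j hij r hr
end

section
/- Solution of the QCLP with small L1 budget: let a in R^p be nonzero, S = {i : |a_i| = max_j |a_j|}, and 0 < c < sqrt(|S|). Then the vector u* defined by u*_i = (c/|S|)*sign(a_i) for i in S and u*_i = 0 otherwise is feasible (||u*||_2 <= 1, ||u*||_1 <= c) and maximizes <a, u> over {u : ||u||_2 <= 1, ||u||_1 <= c}, with optimal value c * max_j |a_j|. -/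
/-! The bound `⟪a, w⟫ ≤ ‖a‖_∞ ‖w‖₁ ≤ c ‖a‖_∞` holds for every feasible `w`, and `u*` attains it
because it spends its whole ℓ¹ budget `c` on coordinates where `|a i| = ‖a‖_∞`, with the signs
of `a`. Spreading it evenly over all of `S` keeps `‖u*‖₂² = c² / |S| ≤ 1`. -/

open Finset

namespace Real

lemma mul_sign_self (x : ℝ) : x * sign x = |x| := by
  rcases lt_trichotomy x 0 with hx | rfl | hx
  · rw [sign_of_neg hx, abs_of_neg hx, mul_neg_one]
  · simp
  · rw [sign_of_pos hx, abs_of_pos hx, mul_one]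

lemma abs_sign_le_one (x : ℝ) : |sign x| ≤ 1 := by
  rcases sign_apply_eq x with h | h | h <;> simp [h]

end Real

variable {ι : Type*} [Fintype ι]

lemma sum_mul_le_iSup_abs_mul_sum_abs (a w : ι → ℝ) :
    ∑ i, a i * w i ≤ (⨆ j, |a j|) * ∑ i, |w i| := by
  rw [mul_sum]
  refine sum_le_sum fun i _ => ?_
  calc a i * w i ≤ |a i| * |w i| := abs_mul (a i) (w i) ▸ le_abs_self _
    _ ≤ (⨆ j, |a j|) * |w i| := by
      gcongr
      exact le_ciSup (f := fun j => |a j|) (Finite.bddAbove_range _) i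

lemma sum_abs_pow_le_card_mul {S : Finset ι} {t : ℝ} {u : ι → ℝ} {n : ℕ} (hn : n ≠ 0)
    (h_supp : ∀ i ∉ S, u i = 0) (h_le : ∀ i ∈ S, |u i| ≤ t) :
    ∑ i, |u i| ^ n ≤ S.card * t ^ n := by
  rw [← sum_subset (subset_univ S) fun i _ hi => by simp [h_supp i hi, hn], ← nsmul_eq_mul]
  exact sum_le_card_nsmul S _ _ fun i hi => pow_le_pow_left₀ (abs_nonneg _) (h_le i hi) n

lemma sum_mul_ite_mul_sign [DecidableEq ι] (a : ι → ℝ) (S : Finset ι) (t : ℝ) :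
    ∑ i, a i * (if i ∈ S then t * Real.sign (a i) else 0) = t * ∑ i ∈ S, |a i| := by
  simp only [mul_ite, mul_zero, sum_ite_mem, univ_inter, mul_sum]
  exact sum_congr rfl fun i _ => by rw [mul_left_comm, Real.mul_sign_self]

theorem stmt_13_general (p : ℕ) (a : Fin p → ℝ) (c : ℝ) (hc : 0 < c)
    (S : Finset (Fin p)) (hS : S = Finset.univ.filter fun i => |a i| = ⨆ j, |a j|)
    (hc2 : c < Real.sqrt S.card)
    (u : Fin p → ℝ)
    (hu : u = fun i => if i ∈ S then (c / S.card) * Real.sign (a i) else 0) :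
    (Real.sqrt (∑ i, u i ^ 2) ≤ 1 ∧ (∑ i, |u i|) ≤ c) ∧
    (∀ w : Fin p → ℝ, Real.sqrt (∑ i, w i ^ 2) ≤ 1 → (∑ i, |w i|) ≤ c →
        (∑ i, a i * w i) ≤ ∑ i, a i * u i) ∧
    (∑ i, a i * u i) = c * ⨆ j, |a j| := by
  have hcard : (0 : ℝ) < S.card := Real.sqrt_pos.mp (hc.trans hc2)
  have h_supp : ∀ i ∉ S, u i = 0 := fun i hi => by simp [hu, hi]
  have h_le : ∀ i ∈ S, |u i| ≤ c / S.card := fun i hi => by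
    simpa [hu, hi, abs_mul, abs_of_pos (div_pos hc hcard)] using
      mul_le_mul_of_nonneg_left (Real.abs_sign_le_one (a i)) (div_pos hc hcard).le
  have h_l1 : ∑ i, |u i| ≤ c := by
    simpa [mul_div_cancel₀ _ hcard.ne'] using sum_abs_pow_le_card_mul one_ne_zero h_supp h_le
  have h_l2 : ∑ i, u i ^ 2 ≤ 1 := by
    have h_sq : c ^ 2 < S.card := (Real.lt_sqrt hc.le).mp hc2
    calc ∑ i, u i ^ 2 = ∑ i, |u i| ^ 2 := by simp only [sq_abs]
      _ ≤ S.card * (c / S.card) ^ 2 := sum_abs_pow_le_card_mul two_ne_zero h_supp h_le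
      _ = c ^ 2 / S.card := by field_simp
      _ ≤ 1 := (div_le_one hcard).mpr h_sq.le
  have h_value : ∑ i, a i * u i = c * ⨆ j, |a j| := by
    have h_max : ∀ i ∈ S, |a i| = ⨆ j, |a j| := fun i hi => by simpa [hS] using hi
    rw [hu, sum_mul_ite_mul_sign, sum_congr rfl h_max, sum_const, nsmul_eq_mul]
    field_simp
  refine ⟨⟨Real.sqrt_le_one.mpr h_l2, h_l1⟩, fun w _ hw => ?_, h_value⟩
  rw [h_value, mul_comm]
  exact (sum_mul_le_iSup_abs_mul_sum_abs a w).trans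
    (mul_le_mul_of_nonneg_left hw (Real.iSup_nonneg fun _ => abs_nonneg _))

theorem stmt_13 (p : ℕ) (a : Fin p → ℝ) (ha : a ≠ 0) (c : ℝ) (hc : 0 < c)
    (S : Finset (Fin p)) (hS : S = Finset.univ.filter fun i => |a i| = ⨆ j, |a j|)
    (hc2 : c < Real.sqrt S.card)
    (u : Fin p → ℝ)
    (hu : u = fun i => if i ∈ S then (c / S.card) * Real.sign (a i) else 0) :
    (Real.sqrt (∑ i, u i ^ 2) ≤ 1 ∧ (∑ i, |u i|) ≤ c) ∧
    (∀ w : Fin p → ℝ, Real.sqrt (∑ i, w i ^ 2) ≤ 1 → (∑ i, |w i|) ≤ c →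
        (∑ i, a i * w i) ≤ ∑ i, a i * u i) ∧
    (∑ i, a i * u i) = c * ⨆ j, |a j| :=
  stmt_13_general p a c hc S hS hc2 u hu
end

section
/- The proximal operator of the L1-ball indicator: for a in R^p with ||a||_1 <= c, the unique minimizer of (1/2)||x - a||_2^2 over {x : ||x||_1 <= c} is x = a. If ||a||_1 > c, then the minimizer is the soft-thresholding S(a, Delta) applied coordinatewise, where Delta > 0 is chosen so that ||S(a, Delta)||_1 = c. -/
/-!
Both minimizers are instances of the obtuse-angle criterion for projections onto a set `K`:
if `s ∈ K` and `⟪a - s, y - s⟫ ≤ 0` for every `y ∈ K`, then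
`‖y - a‖² ≥ ‖s - a‖² + ‖y - s‖²`, so `s` is the unique minimizer of `‖· - a‖²` on `K`.
For `s = a` the criterion is trivial. For `s = S(a, Δ)`, coordinatewise `a - s` is `Δ` times a
subgradient of `|·|` at `s`, so `⟪a - s, y - s⟫ ≤ Δ (‖y‖₁ - ‖s‖₁) = Δ (‖y‖₁ - c) ≤ 0`
on the `ℓ¹`-ball of radius `c`.
-/

noncomputable def softThreshold (t Δ : ℝ) : ℝ :=
  if t > Δ then t - Δ else if t < -Δ then t + Δ else 0

open Finset

lemma mul_sub_softThreshold_le_mul_abs_sub {Δ : ℝ} (hΔ : 0 ≤ Δ) (a y : ℝ) :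
    (a - softThreshold a Δ) * (y - softThreshold a Δ) ≤ Δ * (|y| - |softThreshold a Δ|) := by
  have hy := le_abs_self y
  have hy' := neg_abs_le y
  unfold softThreshold
  split_ifs with hpos hneg
  · rw [abs_of_pos (by linarith : (0 : ℝ) < a - Δ)]
    nlinarith
  · rw [abs_of_neg (by linarith : a + Δ < 0)]
    nlinarith
  · have ha : |a| ≤ Δ := abs_le.mpr ⟨by linarith, by linarith⟩
    calc (a - 0) * (y - 0) ≤ |a| * |y| := by rw [sub_zero, sub_zero, ← abs_mul]; exact le_abs_self _
      _ ≤ Δ * (|y| - |0|) := by rw [abs_zero, sub_zero]; gcongr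

section Projection

variable {ι : Type*} [Fintype ι]

lemma sum_mul_sub_softThreshold_le {Δ : ℝ} (hΔ : 0 ≤ Δ) (a y : ι → ℝ) :
    ∑ i, (a i - softThreshold (a i) Δ) * (y i - softThreshold (a i) Δ) ≤
      Δ * (∑ i, |y i| - ∑ i, |softThreshold (a i) Δ|) := by
  rw [← sum_sub_distrib, mul_sum]
  exact sum_le_sum fun i _ => mul_sub_softThreshold_le_mul_abs_sub hΔ (a i) (y i)

lemma eq_of_sum_sq_sub_nonpos {x s : ι → ℝ} (h : ∑ i, (x i - s i) ^ 2 ≤ 0) : x = s := by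
  have hzero := (Fintype.sum_eq_zero_iff_of_nonneg fun i => sq_nonneg (x i - s i)).mp
    (le_antisymm h (by positivity))
  funext i
  exact sub_eq_zero.mp (pow_eq_zero_iff two_ne_zero |>.mp (congrFun hzero i))

lemma sum_sq_sub_add_sum_sq_sub_le {a s y : ι → ℝ}
    (hobtuse : ∑ i, (a i - s i) * (y i - s i) ≤ 0) :
    ∑ i, (s i - a i) ^ 2 + ∑ i, (y i - s i) ^ 2 ≤ ∑ i, (y i - a i) ^ 2 := by
  have hsplit : ∑ i, (y i - a i) ^ 2 = ∑ i, (s i - a i) ^ 2 + ∑ i, (y i - s i) ^ 2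
      - 2 * ∑ i, (a i - s i) * (y i - s i) := by
    rw [mul_sum, ← sum_add_distrib, ← sum_sub_distrib]
    exact sum_congr rfl fun i _ => by ring
  linarith

theorem isMinimizer_iff_eq_of_obtuse {K : Set (ι → ℝ)} {a s : ι → ℝ} (hs : s ∈ K)
    (hobtuse : ∀ y ∈ K, ∑ i, (a i - s i) * (y i - s i) ≤ 0) {x : ι → ℝ} (hx : x ∈ K) :
    (∀ y ∈ K, (1 / 2) * ∑ i, (x i - a i) ^ 2 ≤ (1 / 2) * ∑ i, (y i - a i) ^ 2) ↔ x = s := by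
  constructor
  · intro hmin
    have hxs := hmin s hs
    have hpyth := sum_sq_sub_add_sum_sq_sub_le (hobtuse x hx)
    exact eq_of_sum_sq_sub_nonpos (by linarith)
  · rintro rfl y hy
    have hpyth := sum_sq_sub_add_sum_sq_sub_le (hobtuse y hy)
    have hnonneg : 0 ≤ ∑ i, (y i - x i) ^ 2 := by positivity
    linarith

end Projection

theorem stmt_16_general (p : ℕ) (c : ℝ) (a : Fin p → ℝ) :
    ((∑ i, |a i|) ≤ c →
      ∀ x : Fin p → ℝ, (∑ i, |x i|) ≤ c →
        ((∀ y : Fin p → ℝ, (∑ i, |y i|) ≤ c →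
            (1 / 2) * ∑ i, (x i - a i) ^ 2 ≤ (1 / 2) * ∑ i, (y i - a i) ^ 2) ↔ x = a)) ∧
    ((∑ i, |a i|) > c →
      ∀ Δ : ℝ, 0 < Δ → (∑ i, |softThreshold (a i) Δ|) = c →
        ∀ x : Fin p → ℝ, (∑ i, |x i|) ≤ c →
          ((∀ y : Fin p → ℝ, (∑ i, |y i|) ≤ c →
              (1 / 2) * ∑ i, (x i - a i) ^ 2 ≤ (1 / 2) * ∑ i, (y i - a i) ^ 2) ↔
            x = fun i => softThreshold (a i) Δ)) := by
  refine ⟨fun ha x hx => ?_, fun _ Δ hΔ hs x hx => ?_⟩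
  · refine isMinimizer_iff_eq_of_obtuse (K := {y | ∑ i, |y i| ≤ c}) ha (fun y _ => ?_) hx
    simp
  · refine isMinimizer_iff_eq_of_obtuse (K := {y | ∑ i, |y i| ≤ c}) hs.le (fun y hy => ?_) hx
    calc _ ≤ Δ * (∑ i, |y i| - ∑ i, |softThreshold (a i) Δ|) :=
          sum_mul_sub_softThreshold_le hΔ.le a y
      _ ≤ 0 := mul_nonpos_of_nonneg_of_nonpos hΔ.le (by rw [hs]; exact sub_nonpos.mpr hy)

theorem stmt_16 (p : ℕ) (c : ℝ) (hc : 0 < c) (a : Fin p → ℝ) :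
    ((∑ i, |a i|) ≤ c →
      ∀ x : Fin p → ℝ, (∑ i, |x i|) ≤ c →
        ((∀ y : Fin p → ℝ, (∑ i, |y i|) ≤ c →
            (1 / 2) * ∑ i, (x i - a i) ^ 2 ≤ (1 / 2) * ∑ i, (y i - a i) ^ 2) ↔ x = a)) ∧
    ((∑ i, |a i|) > c →
      ∀ Δ : ℝ, 0 < Δ → (∑ i, |softThreshold (a i) Δ|) = c →
        ∀ x : Fin p → ℝ, (∑ i, |x i|) ≤ c →
          ((∀ y : Fin p → ℝ, (∑ i, |y i|) ≤ c →
              (1 / 2) * ∑ i, (x i - a i) ^ 2 ≤ (1 / 2) * ∑ i, (y i - a i) ^ 2) ↔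
            x = fun i => softThreshold (a i) Δ)) :=
  stmt_16_general p c a
end
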